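/- arXiv:2112.04451 — 2 statements merged into one kernel-verified Lean document; each statement's English description precedes it below -/
import Mathlib

section
/- For every computable discrete semimeasure m, there exist a computable time bound t and a constant c > 0 such that m(σ) ≤ c · m^t(σ) for all strings σ, where m^t is the time-bounded version of the universal lower-semicomputable discrete semimeasure. -/
open Filter

/-- Finite binary strings. -/
abbrev Str : Type := List Bool
/-- Oracles / infinite binary sequences (subsets of ℕ). -/
abbrev Oracle : Type := ℕ → Bool

/-- The first `s` bits of an oracle. -/
def oracleInit (A : Oracle) (s : ℕ) : List Bool := (List.range s).map A
/-- The prefix of length `n` of a set `X`. -/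
def prefixStr (X : Oracle) (n : ℕ) : Str := (List.range n).map X
/-- Unary encoding of a natural number as a string. -/
def strOfNat (n : ℕ) : Str := List.replicate n true
/-- The trivial (computable) oracle. -/
def emptyOracle : Oracle := fun _ => false
/-- The join `X ⊕ Y` of two oracles. -/
def oracleJoin (X Y : Oracle) : Oracle := fun n => if n % 2 = 0 then X (n / 2) else Y (n / 2)

/-- An oracle Turing machine, presented by its step-bounded evaluation function:
`eval o τ s` is the result (if any) of running the machine for `s` steps on input `τ`
with access to the finite oracle portion `o`.  It is required to be computable and
monotone in the number of steps and the oracle information. -/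
structure OracleMachine where
  eval : List Bool → Str → ℕ → Option Str
  computable : Computable fun p : (List Bool × Str) × ℕ => eval p.1.1 p.1.2 p.2
  mono : ∀ {o o' : List Bool} {τ : Str} {s s' : ℕ} {ρ : Str}, o <+: o' → s ≤ s' →
    eval o τ s = some ρ → eval o' τ s' = some ρ

/-- `M.run A τ s` : running `M` with oracle `A` on input `τ` for `s` steps. -/
def OracleMachine.run (M : OracleMachine) (A : Oracle) (τ : Str) (s : ℕ) : Option Str :=
  M.eval (oracleInit A s) τ s

/-- `M^A(τ)` halts. -/
def OracleMachine.Halts (M : OracleMachine) (A : Oracle) (τ : Str) : Prop :=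
  ∃ s, (M.run A τ s).isSome

/-- A machine is prefix-free if, for each oracle, its domain is a prefix-free set of strings. -/
def OracleMachine.PrefixFree (M : OracleMachine) : Prop :=
  ∀ (A : Oracle) (τ τ' : Str), M.Halts A τ → M.Halts A τ' → τ <+: τ' → τ = τ'

/-- A universal prefix-free oracle machine: it simulates every prefix-free oracle machine
via a fixed coding prefix, with at most quadratic overhead in computation time. -/
structure UniversalPM where
  M : OracleMachine
  prefixFree : M.PrefixFree
  universal : ∀ N : OracleMachine, N.PrefixFree →
    ∃ (ρ : Str) (c : ℕ), 0 < c ∧ ∀ (A : Oracle) (σ out : Str) (s : ℕ),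
      N.run A σ s = some out → M.run A (ρ ++ σ) (c * (s + 1) ^ 2) = some out

/-- Time-bounded prefix-free Kolmogorov complexity `K^{A,t}(σ)` relative to oracle `A`. -/
noncomputable def Kt (U : UniversalPM) (A : Oracle) (t : ℕ → ℕ) (σ : Str) : ℕ :=
  sInf {n | ∃ τ : Str, τ.length = n ∧ U.M.run A τ (t σ.length) = some σ}

/-- Prefix-free Kolmogorov complexity `K^A(σ)` relative to oracle `A`. -/
noncomputable def K (U : UniversalPM) (A : Oracle) (σ : Str) : ℕ :=
  sInf {n | ∃ τ : Str, τ.length = n ∧ ∃ s, U.M.run A τ s = some σ}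

/-- A (computable) time bound: total, computable and non-decreasing. -/
def IsTimeBound (t : ℕ → ℕ) : Prop := Computable t ∧ Monotone t

/-- `X` is deep relative to the oracle `A`: for every computable time bound `t`,
`K^{A,t}(X↾n) − K^A(X↾n) → ∞`. -/
noncomputable def DeepRel (U : UniversalPM) (A : Oracle) (X : Oracle) : Prop :=
  ∀ t : ℕ → ℕ, IsTimeBound t →
    Tendsto (fun n => (Kt U A t (prefixStr X n) : ℤ) - (K U A (prefixStr X n) : ℤ))
      atTop atTop

/-- `X` is deep. -/
noncomputable def Deep (U : UniversalPM) (X : Oracle) : Prop := DeepRel U emptyOracle X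

/-- `X` is Martin-Löf random relative to `A` : `K^A(X↾n) ≥ n − O(1)`. -/
noncomputable def MLRandomRel (U : UniversalPM) (A X : Oracle) : Prop :=
  ∃ c : ℕ, ∀ n : ℕ, (n : ℤ) - c ≤ (K U A (prefixStr X n) : ℤ)

/-- `X` is Martin-Löf random. -/
noncomputable def MLRandom (U : UniversalPM) (X : Oracle) : Prop :=
  MLRandomRel U emptyOracle X

/-- `M` computes the set `A` from the oracle `B`. -/
def ComputesVia (M : OracleMachine) (B A : Oracle) : Prop :=
  ∀ n : ℕ, ∃ s, M.run B (strOfNat n) s = some [A n]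

/-- Turing reducibility `A ≤_T B`. -/
def TuringRed (A B : Oracle) : Prop := ∃ M : OracleMachine, ComputesVia M B A

/-- Truth-table reducibility: `A ≤_T B` via a machine which, within a computable
time bound, halts on every oracle. -/
def ttRed (A B : Oracle) : Prop :=
  ∃ (M : OracleMachine) (t : ℕ → ℕ), IsTimeBound t ∧
    (∀ (X : Oracle) (n : ℕ), (M.run X (strOfNat n) (t n)).isSome) ∧
    ∀ n : ℕ, M.run B (strOfNat n) (t n) = some [A n]

open Classical in
/-- The halting problem `A′` relative to `A` (halting set of the universal machine `U^A`). -/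
noncomputable def jump (U : UniversalPM) (A : Oracle) : Oracle :=
  fun n => if U.M.Halts A ((Encodable.decode (α := Str) n).getD []) then true else false

/-- A discrete semimeasure. -/
def IsSemimeasure (m : Str → ℝ) : Prop := (∀ σ, 0 ≤ m σ) ∧ ∑' σ : Str, m σ ≤ 1

/-- The pointwise limit (supremum) of a non-decreasing family of rational approximations. -/
noncomputable def limitOf (a : ℕ → Str → ℚ) (σ : Str) : ℝ := ⨆ s, ((a s σ : ℝ))

/-- A lower-semicomputable discrete semimeasure (lss). -/
def IsLSS (m : Str → ℝ) : Prop :=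
  IsSemimeasure m ∧ ∃ a : ℕ → Str → ℚ,
    Computable (fun p : ℕ × Str => a p.1 p.2) ∧ (∀ σ, Monotone fun s => a s σ) ∧
    (∀ s σ, 0 ≤ a s σ) ∧ (∀ σ, BddAbove (Set.range fun s => ((a s σ : ℝ)))) ∧ m = limitOf a

/-- A universal lower-semicomputable discrete semimeasure `𝐦`, given together with a fixed
non-decreasing computable approximation `approx`. -/
structure UnivLSS where
  approx : ℕ → Str → ℚ
  computable : Computable fun p : ℕ × Str => approx p.1 p.2
  mono : ∀ σ, Monotone fun s => approx s σ
  nonneg : ∀ s σ, 0 ≤ approx s σ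
  bdd : ∀ σ, BddAbove (Set.range fun s => ((approx s σ : ℝ)))
  lss : IsLSS (limitOf approx)
  universal : ∀ m : Str → ℝ, IsLSS m → ∃ c : ℝ, 0 < c ∧ ∀ σ, m σ ≤ c * limitOf approx σ

/-- The universal lss `𝐦`. -/
noncomputable def UnivLSS.m (Mm : UnivLSS) : Str → ℝ := limitOf Mm.approx

/-- The time-bounded version `𝐦^t(σ) = 𝐦_{t(|σ|)}(σ)`. -/
def UnivLSS.mt (Mm : UnivLSS) (t : ℕ → ℕ) (σ : Str) : ℚ := Mm.approx (t σ.length) σ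

namespace CSLMTaux

open Encodable

/-! ### Primitive recursiveness of `Nat.gcd` -/

def gstep : ℕ × ℕ → ℕ × ℕ := fun p => if p.1 = 0 then p else (p.2 % p.1, p.1)

lemma gstep_iter : ∀ (n x y : ℕ), x ≤ n → gstep^[n] (x, y) = (0, Nat.gcd x y) := by
  intro n
  induction n with
  | zero =>
    intro x y hx
    have : x = 0 := Nat.le_zero.mp hx
    subst this
    simp
  | succ n ih =>
    intro x y hx
    rw [Function.iterate_succ_apply]
    by_cases h0 : x = 0
    · subst h0
      have h1 : gstep (0, y) = (0, y) := by simp [gstep]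
      rw [h1]
      exact ih 0 y (Nat.zero_le n)
    · have h1 : gstep (x, y) = (y % x, x) := by simp [gstep, h0]
      have h2 : y % x ≤ n := by
        have := Nat.mod_lt y (Nat.pos_of_ne_zero h0)
        omega
      rw [h1, ih _ _ h2]
      exact congrArg _ (Nat.gcd_rec x y).symm

lemma gcd_primrec : Primrec₂ Nat.gcd := by
  have hstep : Primrec gstep := by
    exact Primrec.ite (Primrec.eq.comp Primrec.fst (Primrec.const 0)) Primrec.id
      (Primrec.pair (Primrec.nat_mod.comp Primrec.snd Primrec.fst) Primrec.fst)
  have hiter : Primrec fun p : ℕ × ℕ => (gstep^[p.1 + 1] p).2 :=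
    Primrec.snd.comp
      (Primrec.nat_iterate (Primrec.succ.comp Primrec.fst) Primrec.id (hstep.comp Primrec.snd).to₂)
  have h : Primrec fun p : ℕ × ℕ => Nat.gcd p.1 p.2 := hiter.of_eq fun p => by
    have h2 := gstep_iter (p.1 + 1) p.1 p.2 (Nat.le_succ _)
    rw [show ((p.1, p.2) : ℕ × ℕ) = p from rfl] at h2
    rw [h2]
  exact h

/-! ### Computability of num/den extraction for `ℚ` -/

def natAbsC (e : ℕ) : ℕ := (e + e % 2) / 2

lemma natAbsC_encode (z : ℤ) : natAbsC (encode z) = z.natAbs := by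
  cases z with
  | ofNat n =>
    show natAbsC (2 * n) = n
    unfold natAbsC
    omega
  | negSucc n =>
    show natAbsC (2 * n + 1) = n + 1
    unfold natAbsC
    omega

/-- The "structural" encoding of `ℚ`. -/
def E' : ℚ → ℕ := @encode ℚ Rat.instEncodable

lemma E'_eq (q : ℚ) : E' q = Nat.pair (encode q.num) q.den := rfl

abbrev memP (k : ℕ) : Prop :=
  0 < k.unpair.2 ∧ Nat.gcd (natAbsC k.unpair.1) k.unpair.2 = 1

def memB (k : ℕ) : Bool := decide (memP k)

lemma natAbsC_primrec : Primrec natAbsC := by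
  unfold natAbsC
  exact Primrec.nat_div.comp
    (Primrec.nat_add.comp Primrec.id (Primrec.nat_mod.comp Primrec.id (Primrec.const 2)))
    (Primrec.const 2)

lemma memB_primrec : Primrec memB := by
  have h1 : PrimrecPred fun k : ℕ => 0 < k.unpair.2 :=
    PrimrecRel.comp Primrec.nat_lt (Primrec.const 0) (Primrec.snd.comp Primrec.unpair)
  have habs : Primrec natAbsC := natAbsC_primrec
  have h2 : PrimrecPred fun k : ℕ => Nat.gcd (natAbsC k.unpair.1) k.unpair.2 = 1 :=
    PrimrecRel.comp Primrec.eq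
      (gcd_primrec.comp (habs.comp (Primrec.fst.comp Primrec.unpair))
        (Primrec.snd.comp Primrec.unpair))
      (Primrec.const 1)
  have h3 : PrimrecPred memP := (h1.and h2).of_eq fun k => Iff.rfl
  exact h3.decide.of_eq fun k => rfl

lemma mem_range_iff (k : ℕ) : k ∈ Set.range E' ↔ memP k := by
  constructor
  · rintro ⟨q, rfl⟩
    rw [E'_eq]
    constructor
    · rw [Nat.unpair_pair]
      exact q.pos
    · rw [Nat.unpair_pair]
      show Nat.gcd (natAbsC (encode q.num)) q.den = 1
      rw [natAbsC_encode]
      exact q.reduced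
  · rintro ⟨h1, h2⟩
    set z : ℤ := Equiv.intEquivNat.symm k.unpair.1 with hz
    have hez : encode z = k.unpair.1 := by
      show Equiv.intEquivNat z = k.unpair.1
      rw [hz]
      exact Equiv.intEquivNat.apply_symm_apply _
    have hcop : z.natAbs.Coprime k.unpair.2 := by
      have h3 : natAbsC (encode z) = z.natAbs := natAbsC_encode z
      rw [hez] at h3
      rw [Nat.Coprime, ← h3]
      exact h2
    refine ⟨⟨z, k.unpair.2, Nat.pos_iff_ne_zero.mp h1, hcop⟩, ?_⟩
    rw [E'_eq]
    show Nat.pair (encode z) k.unpair.2 = k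
    rw [hez, Nat.pair_unpair]

def rankF (k : ℕ) : ℕ := (List.range k).countP memB

lemma countP_eq_foldr (p : ℕ → Bool) (l : List ℕ) :
    l.countP p = l.foldr (fun a acc => if p a then acc + 1 else acc) 0 := by
  induction l with
  | nil => simp
  | cons a l ih =>
    rw [List.countP_cons, List.foldr_cons, ih]
    split <;> omega

lemma rankF_primrec : Primrec rankF := by
  have hstep : Primrec₂ fun (_ : ℕ) (p : ℕ × ℕ) => if memB p.1 then p.2 + 1 else p.2 := by
    exact Primrec.ite
      (PrimrecRel.comp Primrec.eq (memB_primrec.comp (Primrec.fst.comp Primrec.snd))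
        (Primrec.const true))
      (Primrec.succ.comp (Primrec.snd.comp Primrec.snd))
      (Primrec.snd.comp Primrec.snd)
  have h := Primrec.list_foldr Primrec.list_range (Primrec.const 0) hstep
  exact h.of_eq fun k => (countP_eq_foldr memB (List.range k)).symm

lemma rankF_lt {j K : ℕ} (hj : memB j = true) (hjK : j < K) : rankF j < rankF K := by
  have h1 : rankF (j + 1) = rankF j + 1 := by
    unfold rankF
    rw [List.range_succ, List.countP_append]
    simp [hj]
  have h2 : rankF (j + 1) ≤ rankF K :=
    List.Sublist.countP_le (List.range_sublist.mpr hjK)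
  omega

/-- The encode function of the `Primcodable ℚ` instance is the rank of `E'`. -/
lemma encodeP_eq (q : ℚ) :
    @encode ℚ (inferInstance : Primcodable ℚ).toEncodable q = rankF (E' q) := by
  have h0 : @encode ℚ (inferInstance : Primcodable ℚ).toEncodable q =
      (List.range (E' q)).countP fun y =>
        @decide (y ∈ Set.range E') (Encodable.decidableRangeEncode ℚ y) := rfl
  rw [h0]
  unfold rankF
  apply List.countP_congr
  intro y _
  simp only [memB, decide_eq_true_eq]
  exact ⟨fun h => (mem_range_iff y).mp (@of_decide_eq_true _ (Encodable.decidableRangeEncode ℚ y) h),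
    fun h => @decide_eq_true _ (Encodable.decidableRangeEncode ℚ y) ((mem_range_iff y).mpr h)⟩

lemma E'_computable : Computable E' := by
  have hpred : Computable₂ fun (q : ℚ) (k : ℕ) =>
      (memB k && decide (rankF k = @encode ℚ (inferInstance : Primcodable ℚ).toEncodable q)) := by
    apply Computable₂.mk
    have h1 : Computable fun p : ℚ × ℕ => memB p.2 :=
      (memB_primrec.comp Primrec.snd).to_comp
    have h2 : Computable fun p : ℚ × ℕ =>
        decide (rankF p.2 = @encode ℚ (inferInstance : Primcodable ℚ).toEncodable p.1) := by
      have h0 := (Primrec.eq (α := ℕ)).decide.to_comp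
      exact h0.comp ((rankF_primrec.comp Primrec.snd).to_comp)
        (Computable.encode.comp Computable.fst)
    exact (Primrec.and.to_comp).comp h1 h2
  have hp : Partrec fun q : ℚ => Nat.rfind fun k =>
      (Part.some (memB k && decide (rankF k =
        @encode ℚ (inferInstance : Primcodable ℚ).toEncodable q)) : Part Bool) :=
    Partrec.rfind hpred.partrec₂
  apply Partrec.of_eq_tot hp
  intro q
  apply Nat.mem_rfind.mpr
  constructor
  · apply Part.mem_some_iff.mpr
    symm
    rw [Bool.and_eq_true, decide_eq_true_eq]
    refine ⟨?_, (encodeP_eq q).symm⟩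
    rw [memB, decide_eq_true_eq]
    exact (mem_range_iff (E' q)).mp ⟨q, rfl⟩
  · intro k hk
    apply Part.mem_some_iff.mpr
    symm
    rw [Bool.eq_false_iff]
    intro hcontra
    rw [Bool.and_eq_true, decide_eq_true_eq] at hcontra
    have hlt : rankF k < rankF (E' q) := rankF_lt hcontra.1 hk
    rw [encodeP_eq q] at hcontra
    omega

lemma nd_computable : Computable fun q : ℚ => (q.num.natAbs, q.den) := by
  have h : Computable fun q : ℚ => (natAbsC (E' q).unpair.1, (E' q).unpair.2) := by
    have hu : Computable fun q : ℚ => (E' q).unpair :=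
      Primrec.unpair.to_comp.comp E'_computable
    exact Computable.pair (natAbsC_primrec.to_comp.comp (Computable.fst.comp hu))
      (Computable.snd.comp hu)
  apply h.of_eq
  intro q
  rw [E'_eq, Nat.unpair_pair]
  simp [natAbsC_encode]

def qleB (N : ℕ) (a b : ℚ) : Bool :=
  decide (a.num.natAbs * b.den ≤ N * (b.num.natAbs * a.den))

lemma qleB_computable (N : ℕ) : Computable₂ (qleB N) := by
  have hnd := nd_computable
  have h1' := Primrec.nat_mul.to_comp.comp
      (Computable.fst.comp (hnd.comp (Computable.fst (α := ℚ) (β := ℚ))))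
      (Computable.snd.comp (hnd.comp Computable.snd))
  have h1 : Computable fun p : ℚ × ℚ => p.1.num.natAbs * p.2.den := h1'.of_eq fun p => rfl
  have h2' := Primrec.nat_mul.to_comp.comp (Computable.const N)
      (Primrec.nat_mul.to_comp.comp
        (Computable.fst.comp (hnd.comp (Computable.snd (α := ℚ) (β := ℚ))))
        (Computable.snd.comp (hnd.comp Computable.fst)))
  have h2 : Computable fun p : ℚ × ℚ => N * (p.2.num.natAbs * p.1.den) := h2'.of_eq fun p => rfl
  have h3' := (Primrec.nat_le.decide.to_comp).comp h1 h2
  exact Computable₂.mk (h3'.of_eq fun p => rfl)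

lemma qleB_iff (N : ℕ) (a b : ℚ) (ha : 0 ≤ a) (hb : 0 ≤ b) :
    qleB N a b = true ↔ a ≤ (N : ℚ) * b := by
  have hna : (0:ℤ) ≤ a.num := Rat.num_nonneg.mpr ha
  have hnb : (0:ℤ) ≤ b.num := Rat.num_nonneg.mpr hb
  have hda : (0:ℚ) < (a.den : ℚ) := by exact_mod_cast a.pos
  have hdb : (0:ℚ) < (b.den : ℚ) := by exact_mod_cast b.pos
  have e1 : ((a.num.natAbs : ℕ) : ℚ) = ((a.num : ℤ) : ℚ) := by
    rw [← Int.cast_natCast (R := ℚ), Int.natAbs_of_nonneg hna]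
  have e2 : ((b.num.natAbs : ℕ) : ℚ) = ((b.num : ℤ) : ℚ) := by
    rw [← Int.cast_natCast (R := ℚ), Int.natAbs_of_nonneg hnb]
  have key : a ≤ (N:ℚ) * b ↔ (a.num:ℚ) * (b.den:ℚ) ≤ ((N:ℚ) * (b.num:ℚ)) * (a.den:ℚ) := by
    conv_lhs => rw [← Rat.num_div_den a, ← Rat.num_div_den b]
    rw [← mul_div_assoc, div_le_div_iff₀ hda hdb]
  rw [qleB, decide_eq_true_eq, key, ← Nat.cast_le (α := ℚ), Nat.cast_mul, Nat.cast_mul,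
    Nat.cast_mul, e1, e2, mul_assoc]

/-! ### A computable bound on codes of strings of bounded length -/

def Bd : ℕ → ℕ := Nat.rec 0 fun _ acc => Nat.pair 1 acc + 1

lemma Bd_primrec : Primrec Bd :=
  Primrec.nat_rec₁ 0
    (Primrec.succ.comp (Primrec₂.natPair.comp (Primrec.const 1) Primrec.snd))

lemma pair_mono {a b a' b' : ℕ} (h1 : a ≤ a') (h2 : b ≤ b') :
    Nat.pair a b ≤ Nat.pair a' b' := by
  unfold Nat.pair
  split_ifs with hab hab'
  · nlinarith
  · nlinarith
  · nlinarith [Nat.mul_le_mul (show a + 1 ≤ b' by omega) (show a + 1 ≤ b' by omega)]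
  · nlinarith

lemma Bd_mono : Monotone Bd := by
  apply monotone_nat_of_le_succ
  intro n
  show Bd n ≤ Nat.pair 1 (Bd n) + 1
  have h : Bd n ≤ Nat.pair 1 (Bd n) := by
    unfold Nat.pair
    split_ifs with h1
    · nlinarith
    · omega
  omega

def eS : Str → ℕ := @encode Str (inferInstance : Primcodable Str).toEncodable

lemma eS_cons (b : Bool) (l : List Bool) :
    eS (b :: l) = Nat.pair (encode b) (eS l) + 1 := rfl

lemma encode_bool_le (b : Bool) : encode b ≤ 1 := by
  cases b
  · exact Nat.zero_le 1
  · exact Nat.le_refl 1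

lemma eS_le (σ : Str) : eS σ ≤ Bd σ.length := by
  induction σ with
  | nil => exact Nat.le_refl 0
  | cons b l ih =>
    rw [eS_cons]
    show _ ≤ Nat.pair 1 (Bd l.length) + 1
    exact Nat.succ_le_succ (pair_mono (encode_bool_le b) ih)

/-! ### The bounded-search predicate -/

def condB (Mm : UnivLSS) (m : Str → ℚ) (N : ℕ) (p : ℕ × ℕ) (k : ℕ) : Bool :=
  ((@decode Str (inferInstance : Primcodable Str).toEncodable k).map fun σ =>
    cond (decide (σ.length ≤ p.1)) (qleB N (m σ) (Mm.approx p.2 σ)) true).getD true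

lemma condB_computable (Mm : UnivLSS) (m : Str → ℚ) (hm : Computable m) (N : ℕ) :
    Computable₂ (condB Mm m N) := by
  apply Computable₂.mk
  have hdec : Computable fun x : (ℕ × ℕ) × ℕ =>
      @decode Str (inferInstance : Primcodable Str).toEncodable x.2 :=
    Computable.decode.comp Computable.snd
  have hg : Computable₂ fun (x : (ℕ × ℕ) × ℕ) (σ : Str) =>
      cond (decide (σ.length ≤ x.1.1)) (qleB N (m σ) (Mm.approx x.1.2 σ)) true := by
    apply Computable₂.mk
    apply Computable.cond
    · exact (PrimrecRel.comp Primrec.nat_le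
        (Primrec.list_length.comp Primrec.snd)
        (Primrec.fst.comp (Primrec.fst.comp Primrec.fst))).decide.to_comp
    · exact (qleB_computable N).comp (hm.comp Computable.snd)
        ((Computable₂.mk Mm.computable).comp
          (Computable.snd.comp (Computable.fst.comp Computable.fst)) Computable.snd)
    · exact Computable.const true
  have h := Computable.option_getD (Computable.option_map hdec hg) (Computable.const true)
  exact h.of_eq fun x => rfl

lemma condB_elim {Mm : UnivLSS} {m : Str → ℚ} {N : ℕ} {n s k : ℕ} {σ : Str}
    (h : condB Mm m N (n, s) k = true)
    (hdec : @decode Str (inferInstance : Primcodable Str).toEncodable k = some σ)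
    (hlen : σ.length ≤ n) :
    qleB N (m σ) (Mm.approx s σ) = true := by
  have h' : ((@decode Str (inferInstance : Primcodable Str).toEncodable k).map fun σ =>
      cond (decide (σ.length ≤ n)) (qleB N (m σ) (Mm.approx s σ)) true).getD true = true := h
  rw [hdec, Option.map_some, Option.getD_some, decide_eq_true hlen] at h'
  exact h'

lemma condB_intro {Mm : UnivLSS} {m : Str → ℚ} {N : ℕ} {n s k : ℕ}
    (h : ∀ σ : Str, @decode Str (inferInstance : Primcodable Str).toEncodable k = some σ →
      σ.length ≤ n → qleB N (m σ) (Mm.approx s σ) = true) :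
    condB Mm m N (n, s) k = true := by
  show ((@decode Str (inferInstance : Primcodable Str).toEncodable k).map fun σ =>
      cond (decide (σ.length ≤ n)) (qleB N (m σ) (Mm.approx s σ)) true).getD true = true
  cases hdec : @decode Str (inferInstance : Primcodable Str).toEncodable k with
  | none => rfl
  | some σ =>
    rw [Option.map_some, Option.getD_some]
    by_cases hlen : σ.length ≤ n
    · rw [decide_eq_true hlen]
      exact h σ hdec hlen
    · rw [decide_eq_false hlen]
      rfl

def PBb (Mm : UnivLSS) (m : Str → ℚ) (N : ℕ) (p : ℕ × ℕ) : Bool :=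
  Nat.rec true (fun j acc => acc && condB Mm m N p j) (Bd p.1 + 1)

lemma PBb_computable (Mm : UnivLSS) (m : Str → ℚ) (hm : Computable m) (N : ℕ) :
    Computable (PBb Mm m N) := by
  have hh : Computable₂ fun (p : ℕ × ℕ) (q : ℕ × Bool) => q.2 && condB Mm m N p q.1 := by
    apply Computable₂.mk
    have h1 := (Primrec.and.to_comp).comp
      ((Computable.snd.comp (Computable.snd (α := ℕ × ℕ) (β := ℕ × Bool))))
      ((condB_computable Mm m hm N).comp Computable.fst (Computable.fst.comp Computable.snd))
    exact h1.of_eq fun x => rfl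
  have h := Computable.nat_rec
    ((Primrec.succ.comp (Bd_primrec.comp Primrec.fst)).to_comp)
    (Computable.const true) hh
  exact h.of_eq fun p => rfl

lemma natrec_and_iff (c : ℕ → Bool) : ∀ J : ℕ,
    ((Nat.rec true (fun j acc => acc && c j) J : Bool) = true) ↔ ∀ j < J, c j = true := by
  intro J
  induction J with
  | zero => simp
  | succ J ih =>
    have hstep : (Nat.rec true (fun j acc => acc && c j) (J + 1) : Bool) =
        ((Nat.rec true (fun j acc => acc && c j) J : Bool) && c J) := rfl
    rw [hstep, Bool.and_eq_true, ih]
    constructor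
    · rintro ⟨h1, h2⟩ j hj
      rcases Nat.lt_succ_iff_lt_or_eq.mp hj with h | rfl
      · exact h1 j h
      · exact h2
    · intro h
      exact ⟨fun j hj => h j (hj.trans (Nat.lt_succ_self J)), h J (Nat.lt_succ_self J)⟩

lemma PBb_iff (Mm : UnivLSS) (m : Str → ℚ) (N : ℕ) (n s : ℕ) :
    PBb Mm m N (n, s) = true ↔ ∀ j ≤ Bd n, condB Mm m N (n, s) j = true := by
  have h0 : PBb Mm m N (n, s) =
      (Nat.rec true (fun j acc => acc && condB Mm m N (n, s) j) (Bd n + 1) : Bool) := rfl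
  rw [h0, natrec_and_iff (fun j => condB Mm m N (n, s) j) (Bd n + 1)]
  constructor
  · intro h j hj
    exact h j (Nat.lt_succ_of_le hj)
  · intro h j hj
    exact h j (Nat.lt_succ_iff.mp hj)

end CSLMTaux

/-- Every computable discrete semimeasure is multiplicatively dominated by `𝐦^t` for some
computable time bound `t`. -/
theorem computable_semimeasure_le_mt (Mm : UnivLSS) (m : Str → ℚ) (hm : Computable m)
    (hsm : IsSemimeasure fun σ => ((m σ : ℝ))) :
    ∃ (t : ℕ → ℕ) (c : ℝ), IsTimeBound t ∧ 0 < c ∧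
      ∀ σ : Str, (m σ : ℝ) ≤ c * (Mm.mt t σ : ℝ) := by
  classical
  have hm0 : ∀ σ, 0 ≤ m σ := fun σ => by
    have h : (0 : ℝ) ≤ ((m σ : ℝ)) := hsm.1 σ
    exact_mod_cast h
  -- `m` (as a real-valued function) is a lower-semicomputable semimeasure
  have hlss : IsLSS fun σ => ((m σ : ℝ)) := by
    refine ⟨hsm, fun _ σ => m σ, hm.comp Computable.snd, fun σ => monotone_const,
      fun s σ => hm0 σ, fun σ => ?_, ?_⟩
    · have h : (Set.range fun _ : ℕ => ((m σ : ℝ))) = {((m σ : ℝ))} := Set.range_const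
      rw [h]
      exact bddAbove_singleton
    · funext σ
      exact (ciSup_const).symm
  obtain ⟨creal, hcpos, hdom⟩ := Mm.universal _ hlss
  set N : ℕ := ⌈creal⌉₊ + 1 with hNdef
  have hcN : creal < (N : ℝ) := by
    have h1 := Nat.le_ceil creal
    have h2 : ((⌈creal⌉₊ : ℝ)) < ((N : ℕ) : ℝ) := by
      rw [hNdef]
      exact_mod_cast Nat.lt_succ_self _
    linarith
  have hNpos : (0 : ℝ) < (N : ℝ) := lt_trans hcpos hcN
  have hNposQ : (0 : ℚ) < (N : ℚ) := by
    have : 0 < N := Nat.succ_pos _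
    exact_mod_cast this
  -- pointwise stage existence
  have key : ∀ σ : Str, ∃ s, m σ ≤ (N : ℚ) * Mm.approx s σ := by
    intro σ
    have hbdd := Mm.bdd σ
    have hLdef : limitOf Mm.approx σ = ⨆ s, ((Mm.approx s σ : ℝ)) := rfl
    have hL0 : (0 : ℝ) ≤ limitOf Mm.approx σ := by
      rw [hLdef]
      exact le_trans (by exact_mod_cast Mm.nonneg 0 σ) (le_ciSup hbdd 0)
    rcases eq_or_lt_of_le hL0 with hLz | hLpos
    · have h1 : (m σ : ℝ) ≤ 0 := by
        have h2 := hdom σ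
        rw [← hLz, mul_zero] at h2
        exact h2
      have hm00 : m σ = 0 := le_antisymm (by exact_mod_cast h1) (hm0 σ)
      exact ⟨0, by rw [hm00]; exact mul_nonneg hNposQ.le (Mm.nonneg 0 σ)⟩
    · have h1 : (m σ : ℝ) < (N : ℝ) * limitOf Mm.approx σ :=
        lt_of_le_of_lt (hdom σ) (mul_lt_mul_of_pos_right hcN hLpos)
      have h2 : (m σ : ℝ) / (N : ℝ) < limitOf Mm.approx σ := by
        rw [div_lt_iff₀ hNpos, mul_comm]
        exact h1
      rw [hLdef] at h2
      obtain ⟨s, hs⟩ := (lt_ciSup_iff hbdd).mp h2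
      refine ⟨s, ?_⟩
      have h3 : (m σ : ℝ) < (N : ℝ) * (Mm.approx s σ : ℝ) := by
        have h4 := (div_lt_iff₀ hNpos).mp hs
        rw [mul_comm] at h4
        exact h4
      exact_mod_cast h3.le
  -- a single stage works for all short strings
  have H : ∀ n : ℕ, ∃ s, CSLMTaux.PBb Mm m N (n, s) = true := by
    intro n
    have hstage : ∀ j : ℕ, ∃ s, ∀ σ : Str,
        @Encodable.decode Str (inferInstance : Primcodable Str).toEncodable j = some σ →
        σ.length ≤ n → CSLMTaux.qleB N (m σ) (Mm.approx s σ) = true := by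
      intro j
      cases hdec : @Encodable.decode Str (inferInstance : Primcodable Str).toEncodable j with
      | none => exact ⟨0, fun σ h _ => by simp at h⟩
      | some σ =>
        obtain ⟨s, hs⟩ := key σ
        refine ⟨s, fun σ' hσ' _ => ?_⟩
        obtain rfl : σ = σ' := Option.some.inj hσ'
        exact (CSLMTaux.qleB_iff N _ _ (hm0 σ) (Mm.nonneg s σ)).mpr hs
    choose f hf using hstage
    refine ⟨(Finset.range (CSLMTaux.Bd n + 1)).sup f, ?_⟩
    apply (CSLMTaux.PBb_iff Mm m N n _).mpr
    intro j hj
    apply CSLMTaux.condB_intro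
    intro σ hdec hlen
    have hq1 := hf j σ hdec hlen
    have hfs : f j ≤ (Finset.range (CSLMTaux.Bd n + 1)).sup f :=
      Finset.le_sup (Finset.mem_range.mpr (Nat.lt_succ_of_le hj))
    have h1 := (CSLMTaux.qleB_iff N _ _ (hm0 σ) (Mm.nonneg (f j) σ)).mp hq1
    have h2 : Mm.approx (f j) σ ≤ Mm.approx ((Finset.range (CSLMTaux.Bd n + 1)).sup f) σ :=
      Mm.mono σ hfs
    apply (CSLMTaux.qleB_iff N _ _ (hm0 σ) (Mm.nonneg _ σ)).mpr
    calc m σ ≤ (N : ℚ) * Mm.approx (f j) σ := h1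
      _ ≤ _ := mul_le_mul_of_nonneg_left h2 hNposQ.le
  refine ⟨fun n => Nat.find (H n), (N : ℝ), ⟨?_, ?_⟩, hNpos, ?_⟩
  · -- computability of the time bound
    have hPBc := CSLMTaux.PBb_computable Mm m hm N
    have hpred : Computable₂ fun (n s : ℕ) => CSLMTaux.PBb Mm m N (n, s) :=
      Computable₂.mk (hPBc.of_eq fun p => rfl)
    have hp : Partrec fun n : ℕ => Nat.rfind fun s =>
        (Part.some (CSLMTaux.PBb Mm m N (n, s)) : Part Bool) :=
      Partrec.rfind hpred.partrec₂
    apply Partrec.of_eq_tot hp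
    intro n
    apply Nat.mem_rfind.mpr
    constructor
    · exact Part.mem_some_iff.mpr (Nat.find_spec (H n)).symm
    · intro k hk
      apply Part.mem_some_iff.mpr
      exact (Bool.eq_false_iff.mpr (Nat.find_min (H n) hk)).symm
  · -- monotonicity of the time bound
    intro n n' hnn'
    have hPB' := Nat.find_spec (H n')
    have hgoal : CSLMTaux.PBb Mm m N (n, Nat.find (H n')) = true := by
      apply (CSLMTaux.PBb_iff Mm m N n (Nat.find (H n'))).mpr
      intro j hj
      have hj2 : j ≤ CSLMTaux.Bd n := hj
      have hj' : j ≤ CSLMTaux.Bd n' := le_trans hj2 (CSLMTaux.Bd_mono hnn')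
      have hcnd := (CSLMTaux.PBb_iff Mm m N n' (Nat.find (H n'))).mp hPB' j hj'
      apply CSLMTaux.condB_intro
      intro σ hdec hlen
      have hlen2 : σ.length ≤ n := hlen
      exact CSLMTaux.condB_elim hcnd hdec (le_trans hlen2 hnn')
    exact Nat.find_min' (H n) hgoal
  · -- the domination
    intro σ
    have hPB := Nat.find_spec (H σ.length)
    have hj : CSLMTaux.eS σ ≤ CSLMTaux.Bd σ.length := CSLMTaux.eS_le σ
    have hcnd := (CSLMTaux.PBb_iff Mm m N σ.length _).mp hPB (CSLMTaux.eS σ) hj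
    have hq := CSLMTaux.condB_elim hcnd
      (@Encodable.encodek Str (inferInstance : Primcodable Str).toEncodable σ) (le_refl _)
    have hineq := (CSLMTaux.qleB_iff N _ _ (hm0 σ) (Mm.nonneg _ σ)).mp hq
    have h1 : ((m σ : ℚ) : ℝ) ≤ (((N : ℚ) * Mm.approx (Nat.find (H σ.length)) σ : ℚ) : ℝ) := by
      exact_mod_cast hineq
    rw [Rat.cast_mul] at h1
    have h2 : (((N : ℚ) : ℝ)) = ((N : ℕ) : ℝ) := by push_cast; ring
    rw [h2] at h1
    exact h1
end

section
/- If A ≤_tt B and A ≡_T B, then every B-deep set is also A-deep. -/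
open Filter

/-! ### Auxiliary machinery -/

namespace DeepAux

open List

/-- Pad a finite string to an oracle with `false`s. -/
def listOracle (l : List Bool) : Oracle := fun n => l.getD n false

lemma oracleInit_length (A : Oracle) (s : ℕ) : (oracleInit A s).length = s := by
  simp [oracleInit]

lemma oracleInit_getElem (A : Oracle) {s i : ℕ} (h : i < s) :
    (oracleInit A s)[i]'(by simpa [oracleInit_length] using h) = A i := by
  simp [oracleInit]

lemma oracleInit_zero (A : Oracle) : oracleInit A 0 = [] := rfl

lemma oracleInit_prefix (A : Oracle) {s s' : ℕ} (h : s ≤ s') :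
    oracleInit A s <+: oracleInit A s' := by
  refine List.prefix_iff_eq_take.2 ?_
  apply List.ext_getElem
  · simp [oracleInit_length, h]
  · intro i h1 h2
    rw [List.getElem_take]
    rw [oracleInit_getElem, oracleInit_getElem]
    · exact lt_of_lt_of_le (by simpa [oracleInit_length] using h1) h
    · simpa [oracleInit_length] using h1

lemma oracleInit_take (A : Oracle) {k s : ℕ} (h : k ≤ s) :
    (oracleInit A s).take k = oracleInit A k := by
  apply List.ext_getElem
  · simp [oracleInit_length, h]
  · intro i h1 h2
    rw [List.getElem_take, oracleInit_getElem, oracleInit_getElem]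
    · simpa [oracleInit_length] using h2
    · exact lt_of_lt_of_le (by simpa [oracleInit_length, h] using h1) h

lemma prefix_oracleInit_listOracle (l : List Bool) {m : ℕ} (h : l.length ≤ m) :
    l <+: oracleInit (listOracle l) m := by
  refine List.prefix_iff_eq_take.2 ?_
  apply List.ext_getElem
  · simp [oracleInit_length, h]
  · intro i h1 h2
    rw [List.getElem_take, oracleInit_getElem (h := lt_of_lt_of_le h1 h)]
    simp [listOracle, List.getD_eq_getElem?_getD, List.getElem?_eq_getElem h1]

/-- Accumulate bits `g 0, g 1, …` as long as they are all defined. -/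
def accBits (g : ℕ → Option Bool) : ℕ → List Bool
  | 0 => []
  | n + 1 =>
    match g n with
    | some b => if (accBits g n).length = n then accBits g n ++ [b] else accBits g n
    | none => accBits g n

lemma accBits_length_le (g : ℕ → Option Bool) : ∀ n, (accBits g n).length ≤ n := by
  intro n
  induction n with
  | zero => simp [accBits]
  | succ n ih =>
    rw [accBits]
    rcases hg : g n with _ | b
    · exact ih.trans (Nat.le_succ n)
    · by_cases hl : (accBits g n).length = n <;> simp [hl] <;> omega

lemma accBits_prefix_succ (g : ℕ → Option Bool) (n : ℕ) :
    accBits g n <+: accBits g (n + 1) := by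
  rcases hg : g n with _ | b
  · simp [accBits, hg]
  · by_cases hl : (accBits g n).length = n
    · simpa [accBits, hg, hl] using List.prefix_append _ _
    · simp [accBits, hg, hl]

lemma accBits_prefix_mono (g : ℕ → Option Bool) {m n : ℕ} (h : m ≤ n) :
    accBits g m <+: accBits g n := by
  induction n with
  | zero => simpa [Nat.le_zero.1 h] using List.prefix_refl _
  | succ n ih =>
    rcases Nat.eq_or_lt_of_le h with h' | h'
    · rw [h']
    · exact (ih (Nat.lt_succ_iff.1 h')).trans (accBits_prefix_succ g n)

lemma accBits_mono_of {g g' : ℕ → Option Bool}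
    (hg : ∀ n b, g n = some b → g' n = some b) : ∀ n, accBits g n <+: accBits g' n := by
  intro n
  induction n with
  | zero => simp [accBits]
  | succ n ih =>
    rcases hgn : g n with _ | b
    · have e1 : accBits g (n + 1) = accBits g n := by simp [accBits, hgn]
      rw [e1]
      exact ih.trans (accBits_prefix_succ g' n)
    · have e1 : accBits g (n + 1) =
          if (accBits g n).length = n then accBits g n ++ [b] else accBits g n := by
        simp [accBits, hgn]
      have e2 : accBits g' (n + 1) =
          if (accBits g' n).length = n then accBits g' n ++ [b] else accBits g' n := by
        simp [accBits, hg n b hgn]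
      rw [e1, e2]
      by_cases hl : (accBits g n).length = n
      · have h1 := ih.length_le
        have h2 := accBits_length_le g' n
        have hl' : (accBits g' n).length = n := by omega
        have heq : accBits g n = accBits g' n := ih.eq_of_length (by omega)
        rw [if_pos hl, if_pos hl', heq]
      · rw [if_neg hl]
        refine ih.trans ?_
        by_cases hl' : (accBits g' n).length = n
        · rw [if_pos hl']; exact List.prefix_append _ _
        · rw [if_neg hl']

lemma accBits_of_all {g : ℕ → Option Bool} {f : ℕ → Bool} {k : ℕ}
    (h : ∀ n < k, g n = some (f n)) : accBits g k = (List.range k).map f := by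
  induction k with
  | zero => simp [accBits]
  | succ k ih =>
    have ih' := ih (fun n hn => h n (hn.trans (Nat.lt_succ_self k)))
    rw [accBits, h k (Nat.lt_succ_self k)]
    simp [ih', List.range_succ]

/-! ### The simulation machine -/

lemma accBits_computable {g : List Bool → ℕ → Option Bool} (hg : Computable₂ g) :
    Computable fun p : (List Bool × Str) × ℕ => accBits (g p.1.1) p.2 := by
  have hstep : Computable₂ (fun (p : (List Bool × Str) × ℕ) (q : ℕ × List Bool) =>
      Option.casesOn (motive := fun _ => List Bool) (g p.1.1 q.1)
        q.2 (fun b => if q.2.length = q.1 then q.2 ++ [b] else q.2)) := by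
    refine Computable.option_casesOn
      (hg.comp (Computable.fst.comp (Computable.fst.comp Computable.fst))
        (Computable.fst.comp Computable.snd))
      (Computable.snd.comp Computable.snd) ?_
    have hp : Primrec (fun r : (((List Bool × Str) × ℕ) × ℕ × List Bool) × Bool =>
        if r.1.2.2.length = r.1.2.1 then r.1.2.2 ++ [r.2] else r.1.2.2) := by
      refine Primrec.ite ?_ ?_ ?_
      · exact Primrec.eq.comp
          (Primrec.list_length.comp (Primrec.snd.comp (Primrec.snd.comp Primrec.fst)))
          (Primrec.fst.comp (Primrec.snd.comp Primrec.fst))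
      · exact Primrec.list_concat.comp (Primrec.snd.comp (Primrec.snd.comp Primrec.fst))
          Primrec.snd
      · exact Primrec.snd.comp (Primrec.snd.comp Primrec.fst)
    exact hp.to_comp
  have hrec := Computable.nat_rec (Computable.snd)
    (Computable.const ([] : List Bool)) hstep
  refine hrec.of_eq fun p => ?_
  induction p.2 with
  | zero => rfl
  | succ n ih =>
    show (Option.casesOn (g p.1.1 n) _ _ : List Bool) = _
    rw [ih]
    rcases hv : g p.1.1 n with _ | b <;> simp [accBits, hv]

/-- Machine with oracle `o` simulating `W`, feeding it the bits `g o 0, g o 1, …`. -/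
def simMachine (W : OracleMachine) (g : List Bool → ℕ → Option Bool) (hg : Computable₂ g)
    (hst : ∀ {o o' : List Bool} {n : ℕ} {b : Bool}, o <+: o' → g o n = some b → g o' n = some b) :
    OracleMachine where
  eval o τ s := W.eval (accBits (g o) s) τ s
  computable := by
    exact W.computable.comp (Computable.pair (Computable.pair (accBits_computable hg)
      (Computable.snd.comp Computable.fst)) Computable.snd)
  mono := by
    intro o o' τ s s' ρ ho hs h
    exact W.mono ((accBits_mono_of (fun n b hb => hst ho hb) s).trans
      (accBits_prefix_mono _ hs)) hs h

variable {W : OracleMachine} {g : List Bool → ℕ → Option Bool} {hg : Computable₂ g}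
  {hst : ∀ {o o' : List Bool} {n : ℕ} {b : Bool}, o <+: o' → g o n = some b → g o' n = some b}

lemma simMachine_chain (A : Oracle) {s s' : ℕ} (h : s ≤ s')
    (hst' : ∀ {o o' : List Bool} {n : ℕ} {b : Bool}, o <+: o' → g o n = some b → g o' n = some b) :
    accBits (g (oracleInit A s)) s <+: accBits (g (oracleInit A s')) s' :=
  (accBits_mono_of (fun _ _ hb => hst' (oracleInit_prefix A h) hb) s).trans
    (accBits_prefix_mono _ h)

lemma simMachine_run (A : Oracle) (τ : Str) (s : ℕ) :
    (simMachine W g hg @hst).run A τ s = W.eval (accBits (g (oracleInit A s)) s) τ s := rfl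

lemma simMachine_prefixFree (hW : W.PrefixFree) :
    (simMachine W g hg @hst).PrefixFree := by
  intro A τ τ' h1 h2 hpre
  obtain ⟨s₁, hs₁⟩ := h1
  obtain ⟨s₂, hs₂⟩ := h2
  set s₃ := max s₁ s₂ with hs₃
  set C : Oracle := listOracle (accBits (g (oracleInit A s₃)) s₃) with hC
  have key : ∀ s, s ≤ s₃ → ∀ τ'' : Str, (((simMachine W g hg @hst).run A τ'' s).isSome) →
      W.Halts C τ'' := by
    intro s hs τ'' hh
    rw [simMachine_run] at hh
    obtain ⟨ρ, hρ⟩ := Option.isSome_iff_exists.1 hh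
    have hpre2 : accBits (g (oracleInit A s)) s <+: accBits (g (oracleInit A s₃)) s₃ :=
      simMachine_chain A hs @hst
    set m := max s (accBits (g (oracleInit A s₃)) s₃).length with hm
    have hev : W.eval (oracleInit C m) τ'' m = some ρ :=
      W.mono (hpre2.trans (prefix_oracleInit_listOracle _ (le_max_right _ _)))
        (le_max_left _ _) hρ
    exact ⟨m, by simp [OracleMachine.run, hev]⟩
  exact hW C τ τ' (key s₁ (le_max_left _ _) τ hs₁) (key s₂ (le_max_right _ _) τ' hs₂) hpre

end DeepAux

namespace DeepAux

/-! ### A copy machine, giving non-emptiness of the `K` sets -/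

/-- A prefix-free encoding of a string. -/
def encodeC (σ : Str) : Str := List.replicate (Encodable.encode σ) true ++ [false]

def copyEval (τ : Str) : Option Str :=
  if τ = List.replicate (τ.length - 1) true ++ [false] then
    Encodable.decode (τ.length - 1) else none

lemma copyEval_encodeC (σ : Str) : copyEval (encodeC σ) = some σ := by
  have hl : (encodeC σ).length = Encodable.encode σ + 1 := by simp [encodeC]
  rw [copyEval, hl]
  simp [encodeC, Encodable.encodek]

lemma copyEval_primrec : Primrec copyEval := by
  have hrep : Primrec fun τ : Str => List.replicate (τ.length - 1) true := by
    have h1 := Primrec.list_map (g := fun (_ : Str) (_ : ℕ) => true)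
      (Primrec.list_range.comp (Primrec.nat_sub.comp Primrec.list_length (Primrec.const 1)))
      (show Primrec fun _ : Str × ℕ => true from Primrec.const true)
    refine h1.of_eq fun τ => ?_
    simp [List.map_const']
  exact Primrec.ite
    (Primrec.eq.comp Primrec.id (Primrec.list_append.comp hrep (Primrec.const [false])))
    (Primrec.decode.comp (Primrec.nat_sub.comp Primrec.list_length (Primrec.const 1)))
    (Primrec.const none)

def Ncopy : OracleMachine where
  eval _ τ _ := copyEval τ
  computable := copyEval_primrec.to_comp.comp (Computable.snd.comp Computable.fst)
  mono := fun _ _ h => h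

lemma Ncopy_prefixFree : Ncopy.PrefixFree := by
  intro A τ τ' h1 h2 hpre
  obtain ⟨s₁, hs₁⟩ := h1
  obtain ⟨s₂, hs₂⟩ := h2
  have f1 : τ = List.replicate (τ.length - 1) true ++ [false] := by
    by_contra hc
    simp [OracleMachine.run, Ncopy, copyEval, hc] at hs₁
  have f2 : τ' = List.replicate (τ'.length - 1) true ++ [false] := by
    by_contra hc
    simp [OracleMachine.run, Ncopy, copyEval, hc] at hs₂
  have la : τ.length = (τ.length - 1) + 1 := by conv_lhs => rw [f1]; simp
  have lb : τ'.length = (τ'.length - 1) + 1 := by conv_lhs => rw [f2]; simp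
  have hle : τ.length ≤ τ'.length := hpre.length_le
  set a := τ.length - 1 with ha
  set b := τ'.length - 1 with hb
  have hab : a = b := by
    by_contra hne
    have haltb : a < b := by omega
    have hidx : a < τ.length := by omega
    have e1 : τ[a]'hidx = false := by
      simp only [f1]
      have : (List.replicate a true).length = a := by simp
      rw [List.getElem_append_right (by simp)]
      simp
    have hidx' : a < τ'.length := by omega
    have e2 : τ'[a]'hidx' = true := by
      simp only [f2]
      rw [List.getElem_append_left (by simpa using haltb)]
      simp
    have e3 : τ[a]'hidx = τ'[a]'hidx' := hpre.getElem hidx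
    rw [e1, e2] at e3
    exact Bool.false_ne_true e3
  exact hpre.eq_of_length (by omega)

/-! ### `K` and `Kt` basics -/

lemma K_le {U : UniversalPM} {A : Oracle} {σ τ : Str} {s : ℕ}
    (h : U.M.run A τ s = some σ) : K U A σ ≤ τ.length :=
  Nat.sInf_le ⟨τ, rfl, s, h⟩

lemma Kt_le {U : UniversalPM} {A : Oracle} {t : ℕ → ℕ} {σ τ : Str}
    (h : U.M.run A τ (t σ.length) = some σ) : Kt U A t σ ≤ τ.length :=
  Nat.sInf_le ⟨τ, rfl, h⟩

lemma K_set_nonempty (U : UniversalPM) (A : Oracle) (σ : Str) :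
    {n | ∃ τ : Str, τ.length = n ∧ ∃ s, U.M.run A τ s = some σ}.Nonempty := by
  obtain ⟨ρ, c, _, huniv⟩ := U.universal Ncopy Ncopy_prefixFree
  have hrun : Ncopy.run A (encodeC σ) 0 = some σ := by
    simp [OracleMachine.run, Ncopy, copyEval_encodeC]
  exact ⟨_, ρ ++ encodeC σ, rfl, _, huniv A (encodeC σ) σ 0 hrun⟩

lemma K_witness (U : UniversalPM) (A : Oracle) (σ : Str) :
    ∃ τ : Str, τ.length = K U A σ ∧ ∃ s, U.M.run A τ s = some σ :=
  Nat.sInf_mem (K_set_nonempty U A σ)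

lemma Kt_witness {U : UniversalPM} {A : Oracle} {t : ℕ → ℕ} {σ : Str}
    (h : ∃ τ : Str, U.M.run A τ (t σ.length) = some σ) :
    ∃ τ : Str, τ.length = Kt U A t σ ∧ U.M.run A τ (t σ.length) = some σ := by
  obtain ⟨τ, hτ⟩ := h
  exact Nat.sInf_mem (s := {n | ∃ τ : Str, τ.length = n ∧ U.M.run A τ (t σ.length) = some σ})
    ⟨τ.length, τ, rfl, hτ⟩

lemma Kt_nonempty_of_pos {U : UniversalPM} {A : Oracle} {t : ℕ → ℕ} {σ : Str}
    (h : Kt U A t σ ≠ 0) : ∃ τ : Str, U.M.run A τ (t σ.length) = some σ := by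
  by_contra hc
  push_neg at hc
  apply h
  rw [Kt]
  convert Nat.sInf_empty using 2
  rw [Set.eq_empty_iff_forall_notMem]
  rintro n ⟨τ, -, hτ⟩
  exact hc τ hτ

end DeepAux

namespace DeepAux

lemma strOfNat_primrec : Primrec strOfNat := by
  have h1 := Primrec.list_map (g := fun (_ : ℕ) (_ : ℕ) => true) Primrec.list_range
    (show Primrec fun _ : ℕ × ℕ => true from Primrec.const true)
  refine h1.of_eq fun n => ?_
  simp [strOfNat, List.map_const']

/-! ### Bit function computing `B` from `A` (no time bound) -/

def oracleBitFun (N : OracleMachine) : List Bool → ℕ → Option Bool :=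
  fun o n => (N.eval o (strOfNat n) o.length).map List.headI

lemma oracleBitFun_computable (N : OracleMachine) : Computable₂ (oracleBitFun N) := by
  show Computable fun p : List Bool × ℕ =>
    (N.eval p.1 (strOfNat p.2) p.1.length).map List.headI
  exact Computable.option_map
    (N.computable.comp (Computable.pair (Computable.pair Computable.fst
      (strOfNat_primrec.to_comp.comp Computable.snd))
      (Primrec.list_length.to_comp.comp Computable.fst)))
    ((Primrec.list_headI.comp Primrec.snd).to_comp)

lemma oracleBitFun_stable (N : OracleMachine) {o o' : List Bool} {n : ℕ} {b : Bool}
    (ho : o <+: o') (h : oracleBitFun N o n = some b) : oracleBitFun N o' n = some b := by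
  simp only [oracleBitFun] at h ⊢
  obtain ⟨ρ, hρ, rfl⟩ := Option.map_eq_some_iff.1 h
  rw [N.mono ho ho.length_le hρ]
  rfl

lemma oracleBitFun_reaches {N : OracleMachine} {A B : Oracle} (hN : ComputesVia N A B)
    (k s₀ : ℕ) : ∃ s, s₀ ≤ s ∧
      oracleInit B k <+: accBits (oracleBitFun N (oracleInit A s)) s := by
  have hbig : ∀ n : ℕ, ∃ sn : ℕ, ∀ s, sn ≤ s → N.run A (strOfNat n) s = some [B n] := by
    intro n
    obtain ⟨sn, hsn⟩ := hN n
    exact ⟨sn, fun s hs => N.mono (oracleInit_prefix A hs) hs hsn⟩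
  choose sn hsn using hbig
  refine ⟨max (max k s₀) ((Finset.range k).sup sn),
    le_trans (le_max_right k s₀) (le_max_left _ _), ?_⟩
  set s := max (max k s₀) ((Finset.range k).sup sn) with hs
  have hks : k ≤ s := le_trans (le_max_left k s₀) (le_max_left _ _)
  have hall : ∀ n, n < k → oracleBitFun N (oracleInit A s) n = some (B n) := by
    intro n hn
    have hsns : sn n ≤ s :=
      le_trans (Finset.le_sup (Finset.mem_range.2 hn)) (le_max_right _ _)
    have := hsn n s hsns
    rw [OracleMachine.run] at this
    simp only [oracleBitFun, oracleInit_length, this]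
    rfl
  have heq : accBits (oracleBitFun N (oracleInit A s)) k = oracleInit B k :=
    accBits_of_all hall
  exact heq ▸ accBits_prefix_mono _ hks

/-! ### Bit function computing `A` from `B` within the tt time bound -/

def ttBitFun (Mtt : OracleMachine) (ttt : ℕ → ℕ) : List Bool → ℕ → Option Bool :=
  fun o n => if ttt n ≤ o.length then
    (Mtt.eval ((List.range (ttt n)).map (fun i => o.getD i false))
      (strOfNat n) (ttt n)).map List.headI
  else none

lemma ttBitFun_computable (Mtt : OracleMachine) {ttt : ℕ → ℕ} (httc : Computable ttt) :
    Computable₂ (ttBitFun Mtt ttt) := by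
  show Computable fun p : List Bool × ℕ => ttBitFun Mtt ttt p.1 p.2
  have hcond : Computable fun p : List Bool × ℕ => decide (ttt p.2 ≤ p.1.length) :=
    Primrec.nat_le.decide.to_comp.comp (httc.comp Computable.snd)
      (Primrec.list_length.to_comp.comp Computable.fst)
  have hL : Computable fun p : List Bool × ℕ =>
      (List.range (ttt p.2)).map (fun i => p.1.getD i false) := by
    have hp : Primrec₂ fun (o : List Bool) (m : ℕ) =>
        (List.range m).map (fun i => o.getD i false) := by
      refine Primrec.list_map (Primrec.list_range.comp Primrec.snd) ?_
      exact ((Primrec.list_getD false).comp (Primrec.fst.comp Primrec.fst) Primrec.snd).to₂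
    exact hp.to_comp.comp Computable.fst (httc.comp Computable.snd)
  have hbody : Computable fun p : List Bool × ℕ =>
      (Mtt.eval ((List.range (ttt p.2)).map (fun i => p.1.getD i false))
        (strOfNat p.2) (ttt p.2)).map List.headI :=
    Computable.option_map
      (Mtt.computable.comp (Computable.pair (Computable.pair hL
        (strOfNat_primrec.to_comp.comp Computable.snd)) (httc.comp Computable.snd)))
      ((Primrec.list_headI.comp Primrec.snd).to_comp)
  have := Computable.cond hcond hbody (Computable.const none)
  refine this.of_eq fun p => ?_
  by_cases h : ttt p.2 ≤ p.1.length <;> simp [ttBitFun, h]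

lemma ttBitFun_stable (Mtt : OracleMachine) (ttt : ℕ → ℕ) {o o' : List Bool} {n : ℕ} {b : Bool}
    (ho : o <+: o') (h : ttBitFun Mtt ttt o n = some b) : ttBitFun Mtt ttt o' n = some b := by
  simp only [ttBitFun] at h ⊢
  by_cases hc : ttt n ≤ o.length
  · rw [if_pos (hc.trans ho.length_le)]
    rw [if_pos hc] at h
    have hLeq : (List.range (ttt n)).map (fun i => o.getD i false)
        = (List.range (ttt n)).map (fun i => o'.getD i false) := by
      refine List.map_congr_left fun i hi => ?_
      have hilen : i < o.length := lt_of_lt_of_le (List.mem_range.1 hi) hc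
      rw [List.getD_eq_getElem o false hilen,
        List.getD_eq_getElem o' false (lt_of_lt_of_le hilen ho.length_le)]
      exact (ho.getElem hilen).symm ▸ rfl
    rw [← hLeq]
    exact h
  · rw [if_neg hc] at h
    exact absurd h (by simp)

lemma ttBitFun_correct {Mtt : OracleMachine} {ttt : ℕ → ℕ} {A B : Oracle}
    (httB : ∀ n, Mtt.run B (strOfNat n) (ttt n) = some [A n]) {n s : ℕ} (h : ttt n ≤ s) :
    ttBitFun Mtt ttt (oracleInit B s) n = some (A n) := by
  have hL : (List.range (ttt n)).map (fun i => (oracleInit B s).getD i false)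
      = oracleInit B (ttt n) := by
    refine List.map_congr_left fun i hi => ?_
    have hi' : i < s := lt_of_lt_of_le (List.mem_range.1 hi) h
    rw [List.getD_eq_getElem (oracleInit B s) false (by simpa [oracleInit_length] using hi')]
    exact oracleInit_getElem B hi'
  have := httB n
  rw [OracleMachine.run] at this
  simp only [ttBitFun, oracleInit_length, if_pos h, hL, this]
  rfl

end DeepAux

namespace DeepAux

/-- `K^A ≤ K^B + O(1)` when `B ≤_T A`. -/
lemma K_compare (U : UniversalPM) (A B : Oracle) (hBA : TuringRed B A) :
    ∃ c : ℕ, ∀ σ : Str, K U A σ ≤ K U B σ + c := by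
  obtain ⟨N, hN⟩ := hBA
  set M1 := simMachine U.M (oracleBitFun N) (oracleBitFun_computable N)
    (fun {o o' n b} ho hb => oracleBitFun_stable N ho hb) with hM1
  obtain ⟨ρ, c, _, huniv⟩ := U.universal M1
    (simMachine_prefixFree U.prefixFree)
  refine ⟨ρ.length, fun σ => ?_⟩
  obtain ⟨τ, hlen, s, hrun⟩ := K_witness U B σ
  obtain ⟨s', hs's, hpre⟩ := oracleBitFun_reaches hN s s
  have hM1run : M1.run A τ s' = some σ := by
    rw [hM1, simMachine_run]
    exact U.M.mono hpre hs's hrun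
  have h2 := huniv A τ σ s' hM1run
  calc K U A σ ≤ (ρ ++ τ).length := K_le h2
    _ = K U B σ + ρ.length := by rw [List.length_append, hlen]; omega

/-- Time-bounded simulation: an `A`-program running in time `tm` yields a `B`-program
running in time `c₂ * (max tm (ttt tm) + 1)^2`. -/
lemma Kt_compare (U : UniversalPM) (A B : Oracle) (Mtt : OracleMachine) (ttt : ℕ → ℕ)
    (httc : Computable ttt) (httm : Monotone ttt)
    (httB : ∀ n, Mtt.run B (strOfNat n) (ttt n) = some [A n]) :
    ∃ (ρ₂ : Str) (c₂ : ℕ), 0 < c₂ ∧ ∀ (tm : ℕ) (σ τ : Str),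
      U.M.run A τ tm = some σ →
      U.M.run B (ρ₂ ++ τ) (c₂ * (max tm (ttt tm) + 1) ^ 2) = some σ := by
  set M2 := simMachine U.M (ttBitFun Mtt ttt) (ttBitFun_computable Mtt httc)
    (fun {o o' n b} ho hb => ttBitFun_stable Mtt ttt ho hb) with hM2
  obtain ⟨ρ₂, c₂, hc₂, huniv⟩ := U.universal M2 (simMachine_prefixFree U.prefixFree)
  refine ⟨ρ₂, c₂, hc₂, fun tm σ τ hrun => ?_⟩
  set s₁ := max tm (ttt tm) with hs₁
  have hall : ∀ n, n < tm → ttBitFun Mtt ttt (oracleInit B s₁) n = some (A n) := by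
    intro n hn
    exact ttBitFun_correct httB ((httm hn.le).trans (le_max_right _ _))
  have heq : accBits (ttBitFun Mtt ttt (oracleInit B s₁)) tm = oracleInit A tm :=
    accBits_of_all hall
  have hpre : oracleInit A tm <+: accBits (ttBitFun Mtt ttt (oracleInit B s₁)) s₁ :=
    heq ▸ accBits_prefix_mono _ (le_max_left _ _)
  have hM2run : M2.run B τ s₁ = some σ := by
    rw [hM2, simMachine_run]
    exact U.M.mono hpre (le_max_left _ _) hrun
  exact huniv B τ σ s₁ hM2run

end DeepAux

open DeepAux

/-- If `A ≤_tt B` and `A ≡_T B`, then every `B`-deep set is `A`-deep. -/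
theorem deep_preserved (U : UniversalPM) (A B : Oracle)
    (htt : ttRed A B) (hAB : TuringRed A B) (hBA : TuringRed B A)
    (X : Oracle) (hX : DeepRel U B X) : DeepRel U A X := by
  obtain ⟨Mtt, ttt, ⟨httc, httm⟩, htttotal, httB⟩ := htt
  obtain ⟨c₁, hK⟩ := K_compare U A B hBA
  obtain ⟨ρ₂, c₂, hc₂, hKt⟩ := Kt_compare U A B Mtt ttt httc httm httB
  intro t ht
  obtain ⟨htc, htm⟩ := ht
  set t' : ℕ → ℕ := fun m => c₂ * (max (t m) (ttt (t m)) + 1) ^ 2 with ht'def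
  have ht'tb : IsTimeBound t' := by
    constructor
    · have hy : Computable fun m => max (t m) (ttt (t m)) + 1 :=
        Primrec.succ.to_comp.comp (Primrec.nat_max.to_comp.comp htc (httc.comp htc))
      have : Computable fun m => c₂ * ((max (t m) (ttt (t m)) + 1)
          * (max (t m) (ttt (t m)) + 1)) :=
        Primrec.nat_mul.to_comp.comp (Computable.const c₂)
          (Primrec.nat_mul.to_comp.comp hy hy)
      refine this.of_eq fun m => ?_
      rw [ht'def]; ring
    · intro a b hab
      have h1 : t a ≤ t b := htm hab
      have h2 : ttt (t a) ≤ ttt (t b) := httm h1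
      simp only [ht'def]
      gcongr
  have h1 := hX t' ht'tb
  have h0 := hX (fun _ => 0) ⟨Computable.const 0, monotone_const⟩
  rw [tendsto_atTop] at h1 h0 ⊢
  intro C
  filter_upwards [h1 (C + c₁ + ρ₂.length), h0 1] with n hn1 hn0
  set σ := prefixStr X n with hσ
  -- the `Kt U A t` set is nonempty
  have hKt0pos : Kt U B (fun _ => 0) σ ≠ 0 := by
    intro h
    rw [h] at hn0
    push_cast at hn0
    omega
  obtain ⟨τ₀, hτ₀⟩ := Kt_nonempty_of_pos hKt0pos
  have hτ₀' : U.M.eval [] τ₀ 0 = some σ := by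
    simpa [OracleMachine.run, oracleInit_zero] using hτ₀
  have hA0 : U.M.run A τ₀ (t σ.length) = some σ :=
    U.M.mono List.nil_prefix (Nat.zero_le _) hτ₀'
  obtain ⟨τA, hτAlen, hτArun⟩ := Kt_witness ⟨τ₀, hA0⟩
  -- main inequalities
  have h2 := hKt (t σ.length) σ τA hτArun
  have hKtB : Kt U B t' σ ≤ ρ₂.length + Kt U A t σ := by
    have h3 : U.M.run B (ρ₂ ++ τA) (t' σ.length) = some σ := h2
    have := Kt_le h3
    rw [List.length_append, hτAlen] at this
    omega
  have hKA : K U A σ ≤ K U B σ + c₁ := hK σ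
  -- conclude
  have hc1 : (C : ℤ) + c₁ + ρ₂.length ≤ (Kt U B t' σ : ℤ) - K U B σ := hn1
  have hc2 : (Kt U B t' σ : ℤ) ≤ ρ₂.length + Kt U A t σ := by exact_mod_cast hKtB
  have hc3 : (K U A σ : ℤ) ≤ K U B σ + c₁ := by exact_mod_cast hKA
  omega
end
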